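/- Let R = K[x_1,...,x_k] graded by W = [d_1,...,d_k] with gcd 1, d = lcm(d_i). For 0 ≤ r ≤ k−1 define δ_r = lcm over all subsets I ⊆ {1,...,k} with |I| = r+1 of gcd(d_i)_{i∈I}. Then the coefficient of x^r in P_i equals the coefficient of x^r in P_j whenever i ≡ j mod δ_r. -/

import Mathlib

/-!
Let `f_s(a)` be the coefficient of `x^s` in `P_a`, viewed as an `M`-periodic function of `a ∈ ℤ`
(`M = lcm d_i`). We induct on `k`, and for fixed `k` downward on `s`: the Hilbert function is
`O(n^(k-1))`, so the coefficients above `k - 1` vanish. Splitting off the monomials divisible by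
`x_m` gives `H_W(n) = H_{W ∖ d_m}(n) + H_W(n - d_m)`, so `x ↦ P_x - P_{x - d_m}(· - d_m)` is a
Hilbert quasi-polynomial in `k - 1` variables. By induction its `s`-th coefficients are periodic
with the `δ_s` of `W ∖ d_m`, a divisor of `δ_s`, and the Taylor shift by `-d_m` only mixes in
coefficients above `s`, which are `δ_s`-periodic by the downward induction. Hence
`a ↦ f_s(a + d_m) - f_s(a)` is `δ_s`-periodic for every `m`, that is, `a ↦ f_s(a + δ_s) - f_s(a)`
has every `d_m`, hence `gcd d_i`, hence `δ_s` as a period. Thus `f_s` grows linearly along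
multiples of `δ_s`, and an `M`-periodic such function is `δ_s`-periodic.
-/

/-- The Hilbert function of `K[x_1,…,x_k]` graded by weights `w`. -/
noncomputable def hilbFn (k : ℕ) (w : Fin k → ℕ) (n : ℕ) : ℕ :=
  Nat.card {a : Fin k → ℕ // ∑ i, a i * w i = n}

/-- `δ_r` : the lcm of `gcd (d_i)_{i ∈ I}` over all subsets `I` of cardinality `r+1`. -/
def deltaR (k : ℕ) (w : Fin k → ℕ) (r : ℕ) : ℕ :=
  ((Finset.univ : Finset (Finset (Fin k))).filter (fun I => I.card = r + 1)).lcm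
    (fun I => I.gcd w)

open Polynomial Filter Function

namespace Function.Periodic

variable {α : Type*} {f : ℤ → α} {c d : ℤ}

lemma of_dvd (hf : Periodic f c) (hcd : c ∣ d) : Periodic f d := by
  obtain ⟨n, rfl⟩ := hcd
  simpa [mul_comm] using hf.int_mul n

lemma int_gcd (hc : Periodic f c) (hd : Periodic f d) : Periodic f (Int.gcd c d) := by
  rw [Int.gcd_eq_gcd_ab, mul_comm c, mul_comm d]
  exact (hc.int_mul _).add_period (hd.int_mul _)

lemma finset_gcd {ι : Type*} (s : Finset ι) {w : ι → ℕ} (h : ∀ i ∈ s, Periodic f (w i)) :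
    Periodic f (s.gcd w : ℕ) := by
  classical
  induction s using Finset.induction with
  | empty => simp [Periodic]
  | insert i s _ ih =>
    rw [Finset.gcd_insert, gcd_eq_nat_gcd, ← Int.gcd_natCast_natCast]
    exact (h i (s.mem_insert_self i)).int_gcd (ih fun j hj => h j (Finset.mem_insert_of_mem hj))

lemma eq_of_intModEq (hf : Periodic f c) {a b : ℤ} (h : a ≡ b [ZMOD c]) : f a = f b := by
  obtain ⟨t, ht⟩ := Int.modEq_iff_dvd.1 h
  rw [eq_add_of_sub_eq' ht, mul_comm]
  exact (hf.int_mul t a).symm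

/-- Along multiples of `c` the function grows by the constant step `f (a + c) - f a`, and a
period `m` among those multiples forces that step to vanish. -/
lemma of_sub_periodic {G : Type*} [AddCommGroup G] [IsAddTorsionFree G] {f : ℤ → G} {c m : ℤ}
    (hf : Periodic f m) (hm : m ≠ 0) (hcm : c ∣ m)
    (hdiff : Periodic (fun a => f (a + c) - f a) c) : Periodic f c := by
  have hlin : ∀ n : ℕ, ∀ a, f (a + n * c) = f a + n • (f (a + c) - f a) := by
    intro n
    induction n with
    | zero => simp
    | succ n ih =>
      intro a
      have h := hdiff.nat_mul n a
      beta_reduce at h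
      rw [Nat.cast_succ, add_one_mul, ← add_assoc, succ_nsmul, ← add_assoc, ← ih, ← h,
        add_sub_cancel]
  obtain ⟨n, rfl⟩ := hcm
  have hn : n.natAbs ≠ 0 := Int.natAbs_ne_zero.2 (right_ne_zero_of_mul hm)
  have hf' : Periodic f (n.natAbs * c) := by
    have := hf.int_mul n.sign
    rwa [Int.cast_id, mul_left_comm, Int.sign_mul_self_eq_natAbs, mul_comm] at this
  intro a
  have := hlin n.natAbs a
  rw [hf' a, left_eq_add, nsmul_eq_zero_iff_right hn] at this
  exact sub_eq_zero.1 this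

end Function.Periodic

namespace Polynomial

section Asymptotics

variable {𝕜 : Type*} [NormedField 𝕜] [LinearOrder 𝕜] [IsStrictOrderedRing 𝕜] [Archimedean 𝕜]

lemma eq_zero_of_frequently_eval_natCast_eq_zero {p : 𝕜[X]}
    (h : ∃ᶠ n : ℕ in atTop, p.eval (n : 𝕜) = 0) : p = 0 := by
  by_contra hp
  obtain ⟨n, hroot, hnot⟩ := (h.and_eventually
    (tendsto_natCast_atTop_atTop.eventually (eventually_atTop_not_isRoot p hp))).exists
  exact hnot hroot

lemma degree_le_of_frequently_abs_eval_natCast_le [OrderTopology 𝕜] {p q : 𝕜[X]} (hq : q ≠ 0)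
    (h : ∃ᶠ n : ℕ in atTop, |p.eval (n : 𝕜)| ≤ |q.eval (n : 𝕜)|) : p.degree ≤ q.degree := by
  by_contra! hlt
  have hgt := (abs_div_tendsto_atTop_atTop_of_degree_gt p q hlt hq).eventually_gt_atTop 1
  obtain ⟨n, hle, hratio, hroot⟩ := (h.and_eventually (tendsto_natCast_atTop_atTop.eventually
    (hgt.and (eventually_atTop_not_isRoot q hq)))).exists
  rw [abs_div, one_lt_div (abs_pos.2 hroot)] at hratio
  exact hle.not_gt hratio

end Asymptotics

variable {R : Type*} [CommRing R]

lemma coeff_taylor_of_natDegree_le {p : R[X]} {s : ℕ} (hp : p.natDegree ≤ s) (r : R) :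
    (taylor r p).coeff s = p.coeff s := by
  rcases hp.lt_or_eq with hlt | rfl
  · rw [coeff_eq_zero_of_natDegree_lt hlt,
      coeff_eq_zero_of_natDegree_lt (by rwa [natDegree_taylor])]
  · exact coeff_taylor_natDegree (r := r) (f := p)

lemma coeff_taylor_sub_coeff_eq_of_coeff_eq {p q : R[X]} {s : ℕ}
    (h : ∀ t, s < t → p.coeff t = q.coeff t) (r : R) :
    (taylor r p).coeff s - p.coeff s = (taylor r q).coeff s - q.coeff s := by
  have hdeg : (p - q).natDegree ≤ s := natDegree_le_iff_coeff_eq_zero.2 fun t ht => by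
    rw [coeff_sub, h t (by exact_mod_cast ht), sub_self]
  have := coeff_taylor_of_natDegree_le hdeg r
  rw [map_sub, coeff_sub, coeff_sub] at this
  rw [sub_eq_sub_iff_sub_eq_sub, this]

end Polynomial

section PiSingle

variable {ι : Type*} [DecidableEq ι]

lemma sum_add_single_mul [Fintype ι] (a w : ι → ℕ) (m : ι) :
    ∑ i, (a + Pi.single m 1 : ι → ℕ) i * w i = ∑ i, a i * w i + w m := by
  simp [add_mul, Finset.sum_add_distrib, Pi.single_apply]

lemma sub_single_add_single {a : ι → ℕ} {m : ι} (ha : a m ≠ 0) :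
    a - Pi.single m 1 + Pi.single m 1 = a := by
  ext i
  rcases eq_or_ne i m with rfl | hi
  · simp only [Pi.add_apply, Pi.sub_apply, Pi.single_eq_same]
    omega
  · simp [hi]

end PiSingle

section HilbertFunction

variable {k : ℕ}

lemma le_of_sum_mul_eq {w : Fin k → ℕ} (hw : ∀ i, 0 < w i) {n : ℕ} {a : Fin k → ℕ}
    (ha : ∑ i, a i * w i = n) (i : Fin k) : a i ≤ n :=
  ha ▸ (Nat.le_mul_of_pos_right _ (hw i)).trans (Finset.single_le_sum
    (f := fun i => a i * w i) (fun _ _ => Nat.zero_le _) (Finset.mem_univ i))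

lemma finite_sum_mul_eq {w : Fin k → ℕ} (hw : ∀ i, 0 < w i) (n : ℕ) :
    Finite {a : Fin k → ℕ // ∑ i, a i * w i = n} :=
  Finite.of_injective (β := {b : Fin k → ℕ // b ≤ fun _ => n})
    (fun a => ⟨a, fun i => le_of_sum_mul_eq hw a.2 i⟩)
    fun _ _ h => Subtype.ext (Subtype.mk.inj h)

lemma hilbFn_zero_of_ne_zero {w : Fin 0 → ℕ} {n : ℕ} (hn : n ≠ 0) : hilbFn 0 w n = 0 := by
  rw [hilbFn, Nat.card_eq_zero]
  exact Or.inl ⟨fun a => hn (by simpa using a.2.symm)⟩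

lemma hilbFn_succ_le_pow {w : Fin (k + 1) → ℕ} (hw : ∀ i, 0 < w i) (n : ℕ) :
    hilbFn (k + 1) w n ≤ (n + 1) ^ k := by
  have hinj : Injective fun a : {a : Fin (k + 1) → ℕ // ∑ i, a i * w i = n} =>
      fun i : Fin k => (⟨a.1 i.castSucc, Nat.lt_succ_of_le (le_of_sum_mul_eq hw a.2 _)⟩ :
        Fin (n + 1)) := by
    intro a b hab
    have hinit : ∀ i : Fin k, a.1 i.castSucc = b.1 i.castSucc := fun i =>
      congrArg Fin.val (congrFun hab i)
    have hsum := a.2.trans b.2.symm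
    simp only [Fin.sum_univ_castSucc, hinit, add_right_inj] at hsum
    ext i
    rcases Fin.eq_castSucc_or_eq_last i with ⟨j, rfl⟩ | rfl
    · exact hinit j
    · exact Nat.eq_of_mul_eq_mul_right (hw _) hsum
  simpa [hilbFn] using Nat.card_le_card_of_injective _ hinj

lemma hilbFn_succ {w : Fin (k + 1) → ℕ} (hw : ∀ i, 0 < w i) (m : Fin (k + 1)) {n : ℕ}
    (hn : w m ≤ n) :
    hilbFn (k + 1) w n = hilbFn k (w ∘ m.succAbove) n + hilbFn (k + 1) w (n - w m) := by
  set A := {a : Fin (k + 1) → ℕ // ∑ i, a i * w i = n}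
  have hfin := finite_sum_mul_eq hw n
  have hzero : {a : A // a.1 m = 0} ≃ {b : Fin k → ℕ // ∑ i, b i * (w ∘ m.succAbove) i = n} :=
    { toFun a := ⟨m.removeNth a.1.1, by
        simpa [Fin.removeNth, Fin.sum_univ_succAbove _ m, a.2] using a.1.2⟩
      invFun b := ⟨⟨m.insertNth 0 b.1, by simpa [Fin.sum_univ_succAbove _ m] using b.2⟩, by simp⟩
      left_inv a := by
        ext : 2
        simp [← a.2]
      right_inv b := by simp }
  have hpos : {a : A // a.1 m ≠ 0} ≃ {a : Fin (k + 1) → ℕ // ∑ i, a i * w i = n - w m} :=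
    { toFun a := ⟨a.1.1 - Pi.single m 1, by
        have := sum_add_single_mul (a.1.1 - Pi.single m 1) w m
        rw [sub_single_add_single a.2, a.1.2] at this
        omega⟩
      invFun b := ⟨⟨b.1 + Pi.single m 1, by
        rw [sum_add_single_mul, b.2, Nat.sub_add_cancel hn]⟩, by simp⟩
      left_inv a := by
        ext : 2
        exact sub_single_add_single a.2
      right_inv b := by
        ext : 2
        simp }
  rw [hilbFn, hilbFn, hilbFn, ← Nat.card_congr hzero, ← Nat.card_congr hpos, ← Nat.card_sum,
    Nat.card_congr (Equiv.sumCompl _)]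

end HilbertFunction

section Delta

variable {k : ℕ}

lemma deltaR_dvd_deltaR_of_le (w : Fin k → ℕ) {s t : ℕ} (hst : s ≤ t) :
    deltaR k w t ∣ deltaR k w s := by
  classical
  refine Finset.lcm_dvd fun J hJ => ?_
  obtain ⟨I, hIJ, hIc⟩ :=
    Finset.exists_subset_card_eq (show s + 1 ≤ J.card by rw [(Finset.mem_filter.1 hJ).2]; omega)
  exact (Finset.gcd_mono hIJ).trans
    (Finset.dvd_lcm (Finset.mem_filter.2 ⟨Finset.mem_univ _, hIc⟩))

lemma deltaR_comp_succAbove_dvd (w : Fin (k + 1) → ℕ) (m : Fin (k + 1)) (s : ℕ) :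
    deltaR k (w ∘ m.succAbove) s ∣ deltaR (k + 1) w s := by
  classical
  refine Finset.lcm_dvd fun J hJ => ?_
  rw [← Finset.gcd_image]
  refine Finset.dvd_lcm (Finset.mem_filter.2 ⟨Finset.mem_univ _, ?_⟩)
  rw [Finset.card_image_of_injective _ (Fin.succAbove_right_injective (p := m))]
  exact (Finset.mem_filter.1 hJ).2

lemma deltaR_dvd_of_forall_dvd {w : Fin k → ℕ} {M : ℕ} (hM : ∀ i, w i ∣ M) (s : ℕ) :
    deltaR k w s ∣ M := by
  refine Finset.lcm_dvd fun J hJ => ?_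
  obtain ⟨i, hi⟩ := Finset.card_pos.1 (by rw [(Finset.mem_filter.1 hJ).2]; omega)
  exact (Finset.gcd_dvd hi).trans (hM i)

lemma gcd_dvd_deltaR (w : Fin k → ℕ) {s : ℕ} (hs : s < k) :
    Finset.univ.gcd w ∣ deltaR k w s := by
  obtain ⟨I, -, hIc⟩ := Finset.exists_subset_card_eq
    (show s + 1 ≤ (Finset.univ : Finset (Fin k)).card by simpa using hs)
  exact (Finset.gcd_mono (Finset.subset_univ I)).trans
    (Finset.dvd_lcm (Finset.mem_filter.2 ⟨Finset.mem_univ _, hIc⟩))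

end Delta

section QuasiPolynomial

variable {M : ℕ}

lemma ZMod.frequently_natCast_eq [NeZero M] (x : ZMod M) :
    ∃ᶠ n : ℕ in atTop, (n : ZMod M) = x :=
  frequently_atTop.2 fun T =>
    ⟨x.val + T * M, le_add_left (Nat.le_mul_of_pos_right T (NeZero.pos M)), by simp⟩

lemma eventually_eval_sub_taylor {R : Type*} [CommRing R] {P : ZMod M → R[X]} {h : ℕ → R}
    (hP : ∀ᶠ n : ℕ in atTop, (P n).eval (n : R) = h n) (e : ℕ) :
    ∀ᶠ n : ℕ in atTop,
      (P n - taylor (-(e : R)) (P (n - e))).eval (n : R) = h n - h (n - e) := by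
  filter_upwards [hP, (tendsto_sub_atTop_nat e).eventually hP, eventually_ge_atTop e]
    with n hn hne he
  rw [eval_sub, taylor_eval, hn, ← hne, Nat.cast_sub he, Nat.cast_sub he, ← sub_eq_add_neg]

variable [NeZero M] {k : ℕ} {P : ZMod M → ℚ[X]}

lemma eq_zero_of_eventually_eval_eq_hilbFn_zero {w : Fin 0 → ℕ}
    (hP : ∀ᶠ n : ℕ in atTop, (P n).eval (n : ℚ) = hilbFn 0 w n) (x : ZMod M) : P x = 0 :=
  eq_zero_of_frequently_eval_natCast_eq_zero <|
    ((ZMod.frequently_natCast_eq x).and_eventually (hP.and (eventually_ne_atTop 0))).mono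
      fun n ⟨hx, hn, hn0⟩ => by rw [← hx, hn, hilbFn_zero_of_ne_zero hn0, Nat.cast_zero]

lemma natDegree_le_of_eventually_eval_eq_hilbFn {w : Fin (k + 1) → ℕ} (hw : ∀ i, 0 < w i)
    (hP : ∀ᶠ n : ℕ in atTop, (P n).eval (n : ℚ) = hilbFn (k + 1) w n) (x : ZMod M) :
    (P x).natDegree ≤ k := by
  have hq : ((X + C 1 : ℚ[X]) ^ k) ≠ 0 := pow_ne_zero _ (X_add_C_ne_zero 1)
  have hbound : ∃ᶠ n : ℕ in atTop,
      |(P x).eval (n : ℚ)| ≤ |((X + C 1 : ℚ[X]) ^ k).eval (n : ℚ)| :=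
    ((ZMod.frequently_natCast_eq x).and_eventually hP).mono fun n ⟨hx, hn⟩ => by
      rw [← hx, hn]
      simp only [eval_pow, eval_add, eval_X, eval_C, Nat.abs_cast]
      rw [abs_of_nonneg (by positivity)]
      exact_mod_cast hilbFn_succ_le_pow hw n
  have := natDegree_le_natDegree (degree_le_of_frequently_abs_eval_natCast_le hq hbound)
  rwa [natDegree_pow, natDegree_X_add_C, mul_one] at this

end QuasiPolynomial

section Periodicity

def HilbertCoeffsPeriodic (M k : ℕ) : Prop :=
  ∀ w : Fin k → ℕ, (∀ i, w i ∣ M) → ∀ P : ZMod M → ℚ[X],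
    (∀ᶠ n : ℕ in atTop, (P n).eval (n : ℚ) = hilbFn k w n) →
    ∀ s, Periodic (fun a : ℤ => (P a).coeff s) (deltaR k w s)

variable {M : ℕ} [NeZero M] {k : ℕ} {w : Fin (k + 1) → ℕ} {P : ZMod M → ℚ[X]} {s : ℕ}

lemma periodic_coeff_add_sub_coeff (IH : HilbertCoeffsPeriodic M k) (hM : ∀ i, w i ∣ M)
    (hP : ∀ᶠ n : ℕ in atTop, (P n).eval (n : ℚ) = hilbFn (k + 1) w n)
    (hhigher : ∀ t, s < t → Periodic (fun a : ℤ => (P a).coeff t) (deltaR (k + 1) w s))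
    (m : Fin (k + 1)) :
    Periodic (fun a : ℤ => (P (a + w m)).coeff s - (P a).coeff s) (deltaR (k + 1) w s) := by
  have hw : ∀ i, 0 < w i := fun i => Nat.pos_of_dvd_of_pos (hM i) (NeZero.pos M)
  set e := w m
  set Q : ZMod M → ℚ[X] := fun x => P x - taylor (-(e : ℚ)) (P (x - e))
  have hQ : ∀ᶠ n : ℕ in atTop, (Q n).eval (n : ℚ) = hilbFn k (w ∘ m.succAbove) n := by
    filter_upwards [eventually_eval_sub_taylor hP e, eventually_ge_atTop e] with n hn he
    rw [hn, hilbFn_succ hw m he]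
    push_cast
    ring
  have hQper := (IH _ (fun i => hM _) Q hQ s).of_dvd
    (Int.natCast_dvd_natCast.2 (deltaR_comp_succAbove_dvd w m s))
  have htaylor : Periodic (fun a : ℤ => (taylor (-(e : ℚ)) (P a)).coeff s - (P a).coeff s)
      (deltaR (k + 1) w s) := fun a =>
    coeff_taylor_sub_coeff_eq_of_coeff_eq (fun t ht => hhigher t ht a) _
  have hsplit : (fun a : ℤ => (P (a + e)).coeff s - (P a).coeff s) =
      (fun a : ℤ => (Q (a + e : ℤ)).coeff s) +
        fun a : ℤ => (taylor (-(e : ℚ)) (P a)).coeff s - (P a).coeff s := by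
    ext a
    simp [Q]
  rw [hsplit]
  exact (hQper.add_const e).add htaylor

lemma periodic_coeff_of_periodic_higher (IH : HilbertCoeffsPeriodic M k) (hM : ∀ i, w i ∣ M)
    (hP : ∀ᶠ n : ℕ in atTop, (P n).eval (n : ℚ) = hilbFn (k + 1) w n)
    (hhigher : ∀ t, s < t → Periodic (fun a : ℤ => (P a).coeff t) (deltaR (k + 1) w s))
    (hs : s < k + 1) :
    Periodic (fun a : ℤ => (P a).coeff s) (deltaR (k + 1) w s) := by
  set f : ℤ → ℚ := fun a => (P a).coeff s
  have hdiff : ∀ m, Periodic (fun a => f (a + deltaR (k + 1) w s) - f a) (w m) := fun m a => by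
    have := periodic_coeff_add_sub_coeff IH hM hP hhigher m a
    simp only [f, Int.cast_add, Int.cast_natCast] at this ⊢
    rw [add_right_comm _ ((w m : ℕ) : ZMod M)]
    linarith
  have hperM : Periodic f M := fun a => by simp [f]
  refine hperM.of_sub_periodic (by exact_mod_cast NeZero.ne M)
    (Int.natCast_dvd_natCast.2 (deltaR_dvd_of_forall_dvd hM s)) ?_
  exact (Periodic.finset_gcd Finset.univ fun m _ => hdiff m).of_dvd
    (Int.natCast_dvd_natCast.2 (gcd_dvd_deltaR w hs))

lemma periodic_coeff_succ (IH : HilbertCoeffsPeriodic M k) (hM : ∀ i, w i ∣ M)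
    (hP : ∀ᶠ n : ℕ in atTop, (P n).eval (n : ℚ) = hilbFn (k + 1) w n) (s : ℕ) :
    Periodic (fun a : ℤ => (P a).coeff s) (deltaR (k + 1) w s) := by
  by_cases hs : s < k + 1
  · refine periodic_coeff_of_periodic_higher IH hM hP (fun t hst => ?_) hs
    exact (periodic_coeff_succ IH hM hP t).of_dvd
      (Int.natCast_dvd_natCast.2 (deltaR_dvd_deltaR_of_le w hst.le))
  · have hw : ∀ i, 0 < w i := fun i => Nat.pos_of_dvd_of_pos (hM i) (NeZero.pos M)
    intro a
    simp only [coeff_eq_zero_of_natDegree_lt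
      ((natDegree_le_of_eventually_eval_eq_hilbFn hw hP _).trans_lt (not_lt.1 hs))]
termination_by k + 1 - s

theorem hilbertCoeffsPeriodic : ∀ k, HilbertCoeffsPeriodic M k
  | 0 => fun _ _ _ hP s a => by simp [eq_zero_of_eventually_eval_eq_hilbFn_zero hP]
  | k + 1 => fun _ hM _ hP => periodic_coeff_succ (hilbertCoeffsPeriodic k) hM hP

end Periodicity

theorem stmt11_general (k : ℕ) (w : Fin k → ℕ) (hw : ∀ i, 0 < w i)
    (P : ZMod (Finset.univ.lcm w) → Polynomial ℚ)
    (hP : ∃ N : ℕ, ∀ n : ℕ, N ≤ n →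
      (P (n : ZMod (Finset.univ.lcm w))).eval (n : ℚ) = hilbFn k w n)
    (r : ℕ)
    (i j : ℕ) (hij : i ≡ j [MOD deltaR k w r]) :
    (P (i : ZMod (Finset.univ.lcm w))).coeff r
      = (P (j : ZMod (Finset.univ.lcm w))).coeff r := by
  have : NeZero (Finset.univ.lcm w) := ⟨Finset.lcm_ne_zero_iff.2 fun i _ => (hw i).ne'⟩
  have hper := hilbertCoeffsPeriodic k w (fun i => Finset.dvd_lcm (Finset.mem_univ i)) P
    (eventually_atTop.2 hP) r
  simpa using hper.eq_of_intModEq (Int.natCast_modEq_iff.2 hij)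

theorem stmt11 (k : ℕ) (w : Fin k → ℕ) (hw : ∀ i, 0 < w i)
    (hgcd : Finset.univ.gcd w = 1)
    (P : ZMod (Finset.univ.lcm w) → Polynomial ℚ)
    (hP : ∃ N : ℕ, ∀ n : ℕ, N ≤ n →
      (P (n : ZMod (Finset.univ.lcm w))).eval (n : ℚ) = hilbFn k w n)
    (r : ℕ) (hr : r ≤ k - 1)
    (i j : ℕ) (hij : i ≡ j [MOD deltaR k w r]) :
    (P (i : ZMod (Finset.univ.lcm w))).coeff r
      = (P (j : ZMod (Finset.univ.lcm w))).coeff r :=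
  stmt11_general k w hw P hP r i j hij
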